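/- Let f : Y → X be a covering with f(u) = v, and let u' be another vertex in the fiber f^{-1}(v). Then there is a covering automorphism a of f with a(u) = u' if and only if for every closed path γ at v, the lift of γ at u is closed if and only if the lift of γ at u' is closed. Moreover such an automorphism is unique. -/

import Mathlib

/-- A (Serre-style) combinatorial graph: a vertex set `V`, an edge set `E`,
a start map `s`, and a fixed-point-free involution `inv` on edges. -/
structure SerreGraph (V : Type) (E : Type) where
  s : E → V
  inv : E → E
  inv_ne : ∀ e, inv e ≠ e
  inv_inv : ∀ e, inv (inv e) = e

namespace SerreGraph

variable {V E : Type}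

/-- Terminal vertex of an edge. -/
def t (G : SerreGraph V E) (e : E) : V := G.s (G.inv e)

/-- `G.IsPath u w es` : the list of edges `es` is a path from `u` to `w`. -/
def IsPath (G : SerreGraph V E) : V → V → List E → Prop
  | u, w, [] => u = w
  | u, w, e :: es => G.s e = u ∧ G.IsPath (G.t e) w es

/-- A path is reduced when it contains no spur `e, e⁻¹`. -/
def Reduced (G : SerreGraph V E) (es : List E) : Prop :=
  es.Chain' fun a b => b ≠ G.inv a

/-- Elementary homotopy: insertion of a spur `e, e⁻¹`. -/
inductive Elem (G : SerreGraph V E) : List E → List E → Prop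
  | spur (l₁ l₂ : List E) (e : E) : Elem G (l₁ ++ l₂) (l₁ ++ e :: G.inv e :: l₂)

/-- Two edge lists are (freely) homotopic when related by a finite sequence of
insertions/deletions of spurs. -/
def Homotopic (G : SerreGraph V E) : List E → List E → Prop :=
  Relation.EqvGen G.Elem

/-- A graph is connected when any two vertices are joined by a path. -/
def Connected (G : SerreGraph V E) : Prop :=
  ∀ u w : V, ∃ es : List E, G.IsPath u w es

/-- A forest: every closed path is homotopically trivial. -/
def IsForest (G : SerreGraph V E) : Prop :=
  ∀ (v : V) (es : List E), G.IsPath v v es → G.Homotopic es []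

/-- A tree is a connected forest. -/
def IsTree (G : SerreGraph V E) : Prop :=
  G.Connected ∧ G.IsForest

end SerreGraph

/-- A (dimension preserving) map of graphs. -/
structure GraphMap {V E V' E' : Type} (G : SerreGraph V E) (G' : SerreGraph V' E') where
  fV : V → V'
  fE : E → E'
  map_s : ∀ e, G'.s (fE e) = fV (G.s e)
  map_inv : ∀ e, fE (G.inv e) = G'.inv (fE e)

/-- A graph map is a covering when at every vertex the local continuity map on
edge stars is a bijection. -/
def GraphMap.IsCovering {V E V' E' : Type} {G : SerreGraph V E} {G' : SerreGraph V' E'}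
    (f : GraphMap G G') : Prop :=
  ∀ u : V, Function.Bijective
    (fun e : {e : E // G.s e = u} =>
      (⟨f.fE e.1, (f.map_s e.1).trans (congrArg f.fV e.2)⟩ : {e' : E' // G'.s e' = f.fV u}))

/-- A covering automorphism (deck transformation) of a graph map `f : Y → X`:
an automorphism of `Y` commuting with `f`. -/
structure CovAut {VY EY VX EX : Type} {GY : SerreGraph VY EY} {GX : SerreGraph VX EX}
    (f : GraphMap GY GX) where
  eV : VY ≃ VY
  eE : EY ≃ EY
  map_s : ∀ e, GY.s (eE e) = eV (GY.s e)
  map_inv : ∀ e, eE (GY.inv e) = GY.inv (eE e)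
  comm_V : ∀ y, f.fV (eV y) = f.fV y
  comm_E : ∀ e, f.fE (eE e) = f.fE e


/-!
Paths in a covering lift uniquely once their starting vertex is fixed. Hence a deck
transformation taking `u` to `u'` must send the end of any path `μ` from `u` to the end of
the lift of `f ∘ μ` at `u'`, which makes it unique. Conversely this recipe is well defined
exactly when the loop `μ₁ μ₂⁻¹` formed by two paths `μ₁, μ₂` from `u` to the same vertex
projects to a loop whose lift at `u'` is again closed; applied in both directions it gives a
bijection of vertices, which extends to edges by lifting them at the image of their start.
-/

namespace SerreGraph

variable {V E : Type} {G : SerreGraph V E}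

def rev (G : SerreGraph V E) (l : List E) : List E := (l.map G.inv).reverse

theorem rev_rev (G : SerreGraph V E) (l : List E) : G.rev (G.rev l) = l := by
  simp [rev, List.map_reverse, Function.comp_def, G.inv_inv]

theorem isPath_append {a c : V} {l m : List E} :
    G.IsPath a c (l ++ m) ↔ ∃ b, G.IsPath a b l ∧ G.IsPath b c m := by
  induction l generalizing a with
  | nil => exact ⟨fun h => ⟨a, rfl, h⟩, fun ⟨_, hab, h⟩ => hab ▸ h⟩
  | cons e l ih =>
    simp only [List.cons_append, IsPath, ih]
    exact ⟨fun ⟨he, b, h⟩ => ⟨b, ⟨he, h.1⟩, h.2⟩, fun ⟨b, ⟨he, h₁⟩, h₂⟩ => ⟨he, b, h₁, h₂⟩⟩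

theorem IsPath.target_eq {a b b' : V} {l : List E} (h : G.IsPath a b l)
    (h' : G.IsPath a b' l) : b = b' := by
  induction l generalizing a with
  | nil => exact h.symm.trans h'
  | cons e l ih => exact ih h.2 h'.2

theorem IsPath.rev {a b : V} {l : List E} (h : G.IsPath a b l) : G.IsPath b a (G.rev l) := by
  induction l generalizing a with
  | nil => exact h.symm
  | cons e l ih =>
    rw [SerreGraph.rev, List.map_cons, List.reverse_cons]
    exact isPath_append.2 ⟨G.t e, ih h.2, rfl, (congrArg G.s (G.inv_inv e)).trans h.1⟩

end SerreGraph

namespace GraphMap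

variable {VY EY VX EX : Type} {GY : SerreGraph VY EY} {GX : SerreGraph VX EX}
  (f : GraphMap GY GX)

theorem map_t (e : EY) : f.fV (GY.t e) = GX.t (f.fE e) := by
  rw [SerreGraph.t, SerreGraph.t, ← f.map_inv, f.map_s]

theorem isPath_map {y w : VY} {μ : List EY} (h : GY.IsPath y w μ) :
    GX.IsPath (f.fV y) (f.fV w) (μ.map f.fE) := by
  induction μ generalizing y with
  | nil => exact congrArg f.fV h
  | cons e μ ih => exact ⟨(f.map_s e).trans (congrArg f.fV h.1), f.map_t e ▸ ih h.2⟩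

theorem map_rev (μ : List EY) : (GY.rev μ).map f.fE = GX.rev (μ.map f.fE) := by
  simp [SerreGraph.rev, List.map_reverse, Function.comp_def, f.map_inv]

namespace IsCovering

variable {f} (hf : f.IsCovering)
include hf

theorem exists_edge_lift {y : VY} {e' : EX} (h : GX.s e' = f.fV y) :
    ∃ e, GY.s e = y ∧ f.fE e = e' := by
  obtain ⟨⟨e, he⟩, hfe⟩ := (hf y).2 ⟨e', h⟩
  exact ⟨e, he, congrArg Subtype.val hfe⟩

theorem edge_eq {e₁ e₂ : EY} (hs : GY.s e₁ = GY.s e₂) (hfe : f.fE e₁ = f.fE e₂) : e₁ = e₂ :=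
  congrArg Subtype.val ((hf _).1 (a₁ := ⟨e₁, hs⟩) (a₂ := ⟨e₂, rfl⟩) (Subtype.ext hfe))

theorem exists_path_lift {y : VY} {w : VX} {γ : List EX} (h : GX.IsPath (f.fV y) w γ) :
    ∃ μ z, GY.IsPath y z μ ∧ μ.map f.fE = γ := by
  induction γ generalizing y with
  | nil => exact ⟨[], y, rfl, rfl⟩
  | cons e' γ ih =>
    obtain ⟨e, hs, hfe⟩ := hf.exists_edge_lift h.1
    obtain ⟨μ, z, hμ, hμγ⟩ := ih (y := GY.t e) (by rw [f.map_t, hfe]; exact h.2)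
    exact ⟨e :: μ, z, ⟨hs, hμ⟩, by rw [List.map_cons, hfe, hμγ]⟩

theorem target_eq_of_map_eq {y z z' : VY} {μ μ' : List EY} (h : GY.IsPath y z μ)
    (h' : GY.IsPath y z' μ') (hμ : μ.map f.fE = μ'.map f.fE) : z = z' := by
  induction μ generalizing y μ' with
  | nil =>
    obtain rfl : μ' = [] := List.map_eq_nil_iff.1 hμ.symm
    exact h.symm.trans h'
  | cons e μ ih =>
    obtain ⟨e', μ', rfl, hfe, hrest⟩ := List.map_eq_cons_iff.1 hμ.symm
    obtain rfl : e' = e := hf.edge_eq (h'.1.trans h.1.symm) hfe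
    exact ih h.2 h'.2 hrest.symm

theorem fV_eq_of_comp_eq {VZ EZ : Type} {GZ : SerreGraph VZ EZ} (hZ : GZ.Connected)
    {g₁ g₂ : GraphMap GZ GY} (hfg : ∀ e, f.fE (g₁.fE e) = f.fE (g₂.fE e)) {z : VZ}
    (hz : g₁.fV z = g₂.fV z) : g₁.fV = g₂.fV := by
  funext w
  obtain ⟨μ, hμ⟩ := hZ z w
  exact hf.target_eq_of_map_eq (g₁.isPath_map hμ) (hz ▸ g₂.isPath_map hμ) (by simp [hfg])

end IsCovering

end GraphMap

namespace CovAut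

variable {VY EY VX EX : Type} {GY : SerreGraph VY EY} {GX : SerreGraph VX EX}
  {f : GraphMap GY GX}

def toGraphMap (a : CovAut f) : GraphMap GY GY := ⟨a.eV, a.eE, a.map_s, a.map_inv⟩

def symm (a : CovAut f) : CovAut f where
  eV := a.eV.symm
  eE := a.eE.symm
  map_s e := a.eV.injective <| by rw [← a.map_s, Equiv.apply_symm_apply, Equiv.apply_symm_apply]
  map_inv e := a.eE.injective <| by
    rw [a.map_inv, Equiv.apply_symm_apply, Equiv.apply_symm_apply]
  comm_V y := by conv_rhs => rw [← a.eV.apply_symm_apply y, a.comm_V]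
  comm_E e := by conv_rhs => rw [← a.eE.apply_symm_apply e, a.comm_E]

theorem eq_of_eV_apply_eq (hf : f.IsCovering) (hY : GY.Connected) {a₁ a₂ : CovAut f} {u : VY}
    (h : a₁.eV u = a₂.eV u) : a₁ = a₂ := by
  have hV : a₁.eV = a₂.eV := Equiv.ext <| congrFun <|
    hf.fV_eq_of_comp_eq hY (g₁ := a₁.toGraphMap) (g₂ := a₂.toGraphMap)
      (fun e => (a₁.comm_E e).trans (a₂.comm_E e).symm) h
  have hE : a₁.eE = a₂.eE := Equiv.ext fun e =>
    hf.edge_eq (by rw [a₁.map_s, a₂.map_s, hV]) (by rw [a₁.comm_E, a₂.comm_E])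
  cases a₁; cases a₂; cases hV; cases hE; rfl

theorem exists_eV_eq_of_bijective (hf : f.IsCovering) {φ : VY → VY} (hφ_bij : Function.Bijective φ)
    (hφ : ∀ y, f.fV (φ y) = f.fV y)
    (ht : ∀ e e', GY.s e' = φ (GY.s e) → f.fE e' = f.fE e → GY.t e' = φ (GY.t e)) :
    ∃ a : CovAut f, ⇑a.eV = φ := by
  choose ψ hψs hψf using fun e => hf.exists_edge_lift (y := φ (GY.s e)) (e' := f.fE e)
    (by rw [hφ, f.map_s])
  have hψ : Function.Bijective ψ := by
    refine ⟨fun e₁ e₂ h => hf.edge_eq ?_ ?_, fun e' => ?_⟩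
    · exact hφ_bij.1 (by rw [← hψs e₁, h, hψs])
    · rw [← hψf e₁, h, hψf]
    · obtain ⟨y, hy⟩ := hφ_bij.2 (GY.s e')
      obtain ⟨e, hs, hfe⟩ := hf.exists_edge_lift (y := y) (e' := f.fE e')
        (by rw [f.map_s, ← hy, hφ])
      exact ⟨e, hf.edge_eq (by rw [hψs, hs, hy]) (by rw [hψf, hfe])⟩
  refine ⟨⟨Equiv.ofBijective φ hφ_bij, Equiv.ofBijective ψ hψ, hψs, fun e => ?_, hφ, hψf⟩, rfl⟩
  exact hf.edge_eq ((hψs _).trans (ht e (ψ e) (hψs e) (hψf e)).symm)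
    (by simp only [Equiv.ofBijective_apply, hψf, f.map_inv])

end CovAut

section Transport

variable {VY EY VX EX : Type} {GY : SerreGraph VY EY} {GX : SerreGraph VX EX}
  (f : GraphMap GY GX)

def ClosedLiftsTransfer (u u' : VY) : Prop :=
  ∀ μ, GY.IsPath u u μ → ∃ μ', GY.IsPath u' u' μ' ∧ μ'.map f.fE = μ.map f.fE

def Transport (u u' y y' : VY) : Prop :=
  ∃ μ μ', GY.IsPath u y μ ∧ GY.IsPath u' y' μ' ∧ μ.map f.fE = μ'.map f.fE

variable {f} {u u' y y' : VY}

theorem closedLiftsTransfer_iff {v : VX} (hu : f.fV u = v) (hu' : f.fV u' = v) :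
    (∀ γ : List EX, GX.IsPath v v γ →
        ((∃ μ : List EY, GY.IsPath u u μ ∧ μ.map f.fE = γ) ↔
          ∃ μ' : List EY, GY.IsPath u' u' μ' ∧ μ'.map f.fE = γ)) ↔
      ClosedLiftsTransfer f u u' ∧ ClosedLiftsTransfer f u' u := by
  refine ⟨fun H => ⟨fun μ hμ => ?_, fun μ hμ => ?_⟩, ?_⟩
  · exact (H _ (hu ▸ f.isPath_map hμ)).1 ⟨μ, hμ, rfl⟩
  · exact (H _ (hu' ▸ f.isPath_map hμ)).2 ⟨μ, hμ, rfl⟩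
  · rintro ⟨h, h'⟩ γ -
    exact ⟨fun ⟨μ, hμ, hμγ⟩ => hμγ ▸ h μ hμ, fun ⟨μ, hμ, hμγ⟩ => hμγ ▸ h' μ hμ⟩

theorem CovAut.closedLiftsTransfer (a : CovAut f) (ha : a.eV u = u') :
    ClosedLiftsTransfer f u u' := fun μ hμ =>
  ⟨μ.map a.eE, ha ▸ a.toGraphMap.isPath_map hμ, by simp [Function.comp_def, a.comm_E]⟩

theorem Transport.symm (h : Transport f u u' y y') : Transport f u' u y' y :=
  let ⟨μ, μ', hμ, hμ', hμμ'⟩ := h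
  ⟨μ', μ, hμ', hμ, hμμ'.symm⟩

theorem Transport.fV_eq (huu' : f.fV u = f.fV u') (h : Transport f u u' y y') :
    f.fV y = f.fV y' := by
  obtain ⟨μ, μ', hμ, hμ', hμμ'⟩ := h
  exact (f.isPath_map hμ).target_eq (by rw [huu', hμμ']; exact f.isPath_map hμ')

theorem Transport.edge (h : Transport f u u' y y') {e e' : EY} (he : GY.s e = y)
    (he' : GY.s e' = y') (hfe : f.fE e = f.fE e') : Transport f u u' (GY.t e) (GY.t e') := by
  obtain ⟨μ, μ', hμ, hμ', hμμ'⟩ := h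
  exact ⟨μ ++ [e], μ' ++ [e'], SerreGraph.isPath_append.2 ⟨y, hμ, he, rfl⟩,
    SerreGraph.isPath_append.2 ⟨y', hμ', he', rfl⟩, by simp [hμμ', hfe]⟩

theorem exists_transport (hf : f.IsCovering) (hY : GY.Connected) (huu' : f.fV u = f.fV u')
    (y : VY) : ∃ y', Transport f u u' y y' := by
  obtain ⟨μ, hμ⟩ := hY u y
  obtain ⟨μ', y', hμ', hμμ'⟩ := hf.exists_path_lift (huu' ▸ f.isPath_map hμ)
  exact ⟨y', μ, μ', hμ, hμ', hμμ'.symm⟩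

theorem Transport.unique (hf : f.IsCovering) (h : ClosedLiftsTransfer f u u') {y₁ y₂ : VY}
    (h₁ : Transport f u u' y y₁) (h₂ : Transport f u u' y y₂) : y₁ = y₂ := by
  obtain ⟨μ₁, μ₁', hμ₁, hμ₁', hm₁⟩ := h₁
  obtain ⟨μ₂, μ₂', hμ₂, hμ₂', hm₂⟩ := h₂
  obtain ⟨ν, hν, hνm⟩ := h _ (SerreGraph.isPath_append.2 ⟨y, hμ₁, hμ₂.rev⟩)
  obtain ⟨ν₁, ν₂, rfl, hν₁, hν₂⟩ := List.map_eq_append_iff.1 (hνm.trans (List.map_append ..))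
  obtain ⟨c, hc₁, hc₂⟩ := SerreGraph.isPath_append.1 hν
  calc y₁ = c := (hf.target_eq_of_map_eq hc₁ hμ₁' (hν₁.trans hm₁)).symm
    _ = y₂ := hf.target_eq_of_map_eq hc₂.rev hμ₂'
      (by rw [f.map_rev, hν₂, f.map_rev, GX.rev_rev, hm₂])

theorem exists_covAut_of_closedLiftsTransfer (hf : f.IsCovering) (hY : GY.Connected)
    (huu' : f.fV u = f.fV u') (h : ClosedLiftsTransfer f u u')
    (h' : ClosedLiftsTransfer f u' u) : ∃ a : CovAut f, a.eV u = u' := by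
  choose φ hφ using exists_transport hf hY huu'
  have hφ_bij : Function.Bijective φ := by
    refine ⟨fun y₁ y₂ h₁₂ => (hφ y₁).symm.unique hf h' (h₁₂ ▸ (hφ y₂).symm), fun y' => ?_⟩
    obtain ⟨y, hy⟩ := exists_transport hf hY huu'.symm y'
    exact ⟨y, (hφ y).unique hf h hy.symm⟩
  obtain ⟨a, ha⟩ := CovAut.exists_eV_eq_of_bijective hf hφ_bij (fun y => ((hφ y).fV_eq huu').symm)
    (fun e e' hs hfe => ((hφ _).unique hf h ((hφ (GY.s e)).edge rfl hs hfe.symm)).symm)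
  exact ⟨a, ha ▸ (hφ u).unique hf h ⟨[], [], rfl, rfl, rfl⟩⟩

end Transport

theorem exists_unique_covering_automorphism_general {VY EY VX EX : Type}
    {GY : SerreGraph VY EY} {GX : SerreGraph VX EX}
    (f : GraphMap GY GX) (hf : f.IsCovering)
    (hY : GY.Connected)
    (u u' : VY) (v : VX) (hu : f.fV u = v) (hu' : f.fV u' = v) :
    ((∃ a : CovAut f, a.eV u = u') ↔
      ∀ γ : List EX, GX.IsPath v v γ →
        ((∃ μ : List EY, GY.IsPath u u μ ∧ μ.map f.fE = γ) ↔
          ∃ μ' : List EY, GY.IsPath u' u' μ' ∧ μ'.map f.fE = γ)) ∧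
    (∀ a₁ a₂ : CovAut f, a₁.eV u = u' → a₂.eV u = u' → a₁ = a₂) := by
  rw [closedLiftsTransfer_iff hu hu']
  refine ⟨⟨fun ⟨a, ha⟩ => ⟨a.closedLiftsTransfer ha, a.symm.closedLiftsTransfer ?_⟩,
    fun ⟨h, h'⟩ => exists_covAut_of_closedLiftsTransfer hf hY (hu.trans hu'.symm) h h'⟩,
    fun a₁ a₂ h₁ h₂ => CovAut.eq_of_eV_apply_eq hf hY (h₁.trans h₂.symm)⟩
  exact a.eV.symm_apply_eq.2 ha.symm

/-- Let `f : Y → X` be a covering of connected graphs with `f(u) = v = f(u')`.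
There is a covering automorphism sending `u` to `u'` iff for every closed path
`γ` at `v`, the lift of `γ` at `u` is closed iff the lift at `u'` is closed;
moreover such an automorphism is unique. -/
theorem exists_unique_covering_automorphism {VY EY VX EX : Type}
    {GY : SerreGraph VY EY} {GX : SerreGraph VX EX}
    (f : GraphMap GY GX) (hf : f.IsCovering)
    (hY : GY.Connected) (hX : GX.Connected)
    (u u' : VY) (v : VX) (hu : f.fV u = v) (hu' : f.fV u' = v) :
    ((∃ a : CovAut f, a.eV u = u') ↔
      ∀ γ : List EX, GX.IsPath v v γ →
        ((∃ μ : List EY, GY.IsPath u u μ ∧ μ.map f.fE = γ) ↔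
          ∃ μ' : List EY, GY.IsPath u' u' μ' ∧ μ'.map f.fE = γ)) ∧
    (∀ a₁ a₂ : CovAut f, a₁.eV u = u' → a₂.eV u = u' → a₁ = a₂) :=
  exists_unique_covering_automorphism_general f hf hY u u' v hu hu'
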